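/- Let X be a countably compact completely regular Hausdorff space and S ⊆ Cp(X,[0,1]). Then the following are equivalent: (I) the closure of S in Cp(X,[0,1]) is compact; (II) S is countably compact in Cp(X,[0,1]); (III) DLC(S,X) holds. -/

import Mathlib

/-!
(I) ⇒ (II): an infinite subset of a compact set has a limit point.
(II) ⇒ (III): if `F` is a cluster point of `(f n)` in `Cp(X,[0,1])` and `x₀` one of `(x m)` in `X`,
continuity of `F` and of each `f n` forces both iterated limits to be `F x₀`.
(III) ⇒ (I): `[0,1]^X` is compact, so it suffices that every `g` in the pointwise closure of `S` is
continuous. If `g` is discontinuous at `p`, choose inductively `f n ∈ S` approximating `g` at `p`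
and at the earlier points, and `x n` where every `f i`, `i ≤ n`, is close to its value at `p` but
`g (x n)` stays `ε` away from `g p`. Then `lim_m f n (x m) = f n p → g p`, while
`lim_n f n (x m) = g (x m)`, and along a subsequence on which `g (x m)` converges DLC is violated.
-/

open Set Filter Topology

def IsLimitPointOf {Z : Type*} [TopologicalSpace Z] (x : Z) (S : Set Z) : Prop :=
  ∀ U : Set Z, IsOpen U → x ∈ U → (S ∩ U).Infinite

def CountablyCompactIn {Z : Type*} [TopologicalSpace Z] (A B : Set Z) : Prop :=
  ∀ S ⊆ A, S.Infinite → ∃ x ∈ B, IsLimitPointOf x S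

def IsGSpace (Y : Type*) [TopologicalSpace Y] : Prop :=
  ∀ A : Set Y, CountablyCompactIn A Set.univ → IsCompact (closure A)

def IsHereditaryGSpace (Y : Type*) [TopologicalSpace Y] : Prop :=
  ∀ B : Set Y, IsGSpace B

def Cp (X : Type*) [TopologicalSpace X] : Type _ := {f : X → ℝ // Continuous f}

instance (X : Type*) [TopologicalSpace X] : TopologicalSpace (Cp X) :=
  inferInstanceAs (TopologicalSpace {f : X → ℝ // Continuous f})

def CpI (X : Type*) [TopologicalSpace X] : Type _ := {f : X → unitInterval // Continuous f}

instance (X : Type*) [TopologicalSpace X] : TopologicalSpace (CpI X) :=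
  inferInstanceAs (TopologicalSpace {f : X → unitInterval // Continuous f})

def CountablyTight (X : Type*) [TopologicalSpace X] : Prop :=
  ∀ (A : Set X) (x : X), x ∈ closure A → ∃ B ⊆ A, B.Countable ∧ x ∈ closure B

def CountablyCompactSpace' (Y : Type*) [TopologicalSpace Y] : Prop :=
  ∀ S : Set Y, S.Infinite → ∃ x : Y, IsLimitPointOf x S

def DULC {X : Type*} [TopologicalSpace X] (A : Set (CpI X)) : Prop :=
  ∀ (f : ℕ → CpI X), (∀ n, f n ∈ A) → ∀ (x : ℕ → X) (𝒰 𝒱 : Ultrafilter ℕ),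
    (∃ y : X, Filter.Tendsto x (𝒱 : Filter ℕ) (nhds y)) →
    ∀ (g h : ℕ → unitInterval) (u v : unitInterval),
      (∀ n, Filter.Tendsto (fun m => (f n).1 (x m)) (𝒱 : Filter ℕ) (nhds (g n))) →
      Filter.Tendsto g (𝒰 : Filter ℕ) (nhds u) →
      (∀ m, Filter.Tendsto (fun n => (f n).1 (x m)) (𝒰 : Filter ℕ) (nhds (h m))) →
      Filter.Tendsto h (𝒱 : Filter ℕ) (nhds v) →
      u = v

def DLC {X : Type*} [TopologicalSpace X] (A : Set (CpI X)) : Prop :=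
  ∀ (f : ℕ → CpI X), (∀ n, f n ∈ A) → ∀ (x : ℕ → X),
    ∀ (g h : ℕ → unitInterval) (u v : unitInterval),
      (∀ n, Filter.Tendsto (fun m => (f n).1 (x m)) Filter.atTop (nhds (g n))) →
      Filter.Tendsto g Filter.atTop (nhds u) →
      (∀ m, Filter.Tendsto (fun n => (f n).1 (x m)) Filter.atTop (nhds (h m))) →
      Filter.Tendsto h Filter.atTop (nhds v) →
      u = v

theorem isLimitPointOf_iff_clusterPt {Z : Type*} [TopologicalSpace Z] {x : Z} {S : Set Z} :
    IsLimitPointOf x S ↔ ClusterPt x (cofinite ⊓ 𝓟 S) := by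
  simp only [(nhds_basis_opens x).clusterPt_iff_frequently, frequently_inf_principal,
    frequently_cofinite_iff_infinite, IsLimitPointOf, and_imp]
  exact forall_congr' fun U => ⟨fun h hxU hU => h hU hxU, fun h hU hxU => h hxU hU⟩

theorem Filter.cofinite_inf_principal_range_le_map {α β : Type*} (a : α → β) :
    cofinite ⊓ 𝓟 (range a) ≤ map a cofinite := by
  intro s hs
  rw [mem_map, mem_cofinite] at hs
  rw [mem_inf_principal, mem_cofinite]
  refine (hs.image a).subset ?_
  intro y hy
  obtain ⟨⟨n, rfl⟩, hn⟩ := Classical.not_imp.1 hy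
  exact mem_image_of_mem a hn

theorem MapClusterPt.eq_of_tendsto {α Z : Type*} [TopologicalSpace Z] [T2Space Z]
    {l : Filter α} {u : α → Z} {a b : Z} (hb : MapClusterPt b l u) (ha : Tendsto u l (𝓝 a)) :
    b = a :=
  eq_of_nhds_neBot (hb.clusterPt.mono ha)

section CountablyCompactIn

variable {Z : Type*} [TopologicalSpace Z]

theorem countablyCompactIn_univ_of_isCompact_closure {S : Set Z} (hS : IsCompact (closure S)) :
    CountablyCompactIn S univ := fun _ hTS hT =>
  let ⟨x, _, hx⟩ :=
    hT.exists_accPt_cofinite_inf_principal_of_subset_isCompact hS (hTS.trans subset_closure)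
  ⟨x, mem_univ x, isLimitPointOf_iff_clusterPt.2 hx.clusterPt⟩

theorem CountablyCompactSpace'.countablyCompactIn_univ (h : CountablyCompactSpace' Z) :
    CountablyCompactIn (univ : Set Z) univ := fun T _ hT =>
  (h T hT).imp fun x hx => ⟨mem_univ x, hx⟩

theorem CountablyCompactIn.exists_mapClusterPt {A : Set Z} (hA : CountablyCompactIn A univ)
    {a : ℕ → Z} (ha : ∀ n, a n ∈ A) : ∃ x, MapClusterPt x atTop a := by
  rw [← Nat.cofinite_eq_atTop]
  by_cases hfin : (range a).Finite
  · obtain ⟨x, -, hx⟩ := hfin.isCompact.exists_mapClusterPt (f := cofinite)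
      (tendsto_principal.2 (Eventually.of_forall mem_range_self))
    exact ⟨x, hx⟩
  · obtain ⟨x, -, hx⟩ := hA (range a) (range_subset_iff.2 ha) hfin
    exact ⟨x, (isLimitPointOf_iff_clusterPt.1 hx).mono (cofinite_inf_principal_range_le_map a)⟩

end CountablyCompactIn

theorem continuous_cpI_eval {X : Type*} [TopologicalSpace X] (y : X) :
    Continuous fun f : CpI X => f.1 y :=
  (continuous_apply y).comp continuous_subtype_val

theorem dlc_of_countablyCompactIn {X : Type*} [TopologicalSpace X] (hX : CountablyCompactSpace' X)
    {S : Set (CpI X)} (hS : CountablyCompactIn S univ) : DLC S := by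
  intro f hf x g h u v hg hgu hh hhv
  obtain ⟨x₀, hx₀⟩ :=
    hX.countablyCompactIn_univ.exists_mapClusterPt (a := x) fun _ => mem_univ _
  obtain ⟨F, hF⟩ := hS.exists_mapClusterPt hf
  have hF_eval (y : X) : MapClusterPt (F.1 y) atTop fun n => (f n).1 y :=
    hF.continuousAt_comp (continuous_cpI_eval y).continuousAt
  have hg_eq (n : ℕ) : g n = (f n).1 x₀ :=
    ((hx₀.continuousAt_comp (f n).2.continuousAt).eq_of_tendsto (hg n)).symm
  have hh_eq (m : ℕ) : h m = F.1 (x m) := ((hF_eval (x m)).eq_of_tendsto (hh m)).symm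
  have hu : u = F.1 x₀ := ((hF_eval x₀).eq_of_tendsto (hgu.congr hg_eq)).symm
  have hv : v = F.1 x₀ :=
    ((hx₀.continuousAt_comp F.2.continuousAt).eq_of_tendsto (hhv.congr hh_eq)).symm
  rw [hu, hv]

theorem exists_seq_forall_of_history {α : Type*} [DecidableEq α] {R : ℕ → Finset α → α → Prop}
    (h : ∀ n H, ∃ a, R n H a) : ∃ a : ℕ → α, ∀ n, R n ((Finset.range n).image a) (a n) := by
  choose next hnext using h
  let history : ℕ → Finset α := fun n => Nat.rec ∅ (fun k H => insert (next k H) H) n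
  refine ⟨fun n => next n (history n), fun n => ?_⟩
  suffices history n = (Finset.range n).image fun k => next k (history k) by
    rw [← this]; exact hnext n _
  induction n with
  | zero => rfl
  | succ n ih => rw [Finset.range_add_one, Finset.image_insert, ← ih]

theorem exists_mem_forall_dist_lt_of_mem_closure {ι β : Type*} [PseudoMetricSpace β]
    {A : Set (ι → β)} {g : ι → β} (hg : g ∈ closure A) (t : Finset ι) {δ : ℝ} (hδ : 0 < δ) :
    ∃ a ∈ A, ∀ i ∈ t, dist (a i) (g i) < δ := by
  have hnhds : ∀ᶠ a in 𝓝 g, ∀ i ∈ t, dist (a i) (g i) < δ :=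
    (eventually_all_finset t).2 fun i _ =>
      Metric.tendsto_nhds.1 ((continuous_apply i).tendsto g) δ hδ
  obtain ⟨a, ha, haA⟩ := mem_closure_iff_nhds.1 hg _ hnhds
  exact ⟨a, haA, ha⟩

theorem tendsto_of_eventually_dist_lt_one_div {α : Type*} [PseudoMetricSpace α] {u : ℕ → α}
    {c : α} (h : ∀ᶠ n in atTop, dist (u n) c < 1 / ((n : ℝ) + 1)) : Tendsto u atTop (𝓝 c) :=
  tendsto_iff_dist_tendsto_zero.2 <| squeeze_zero' (Eventually.of_forall fun _ => dist_nonneg)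
    (h.mono fun _ hn => hn.le) tendsto_one_div_add_atTop_nhds_zero_nat

theorem isCompact_closure_of_closure_image_val_subset {Y : Type*} [TopologicalSpace Y]
    [CompactSpace Y] {p : Y → Prop} {S : Set (Subtype p)}
    (h : closure (Subtype.val '' S) ⊆ {y | p y}) : IsCompact (closure S) := by
  rw [Subtype.isCompact_iff, IsEmbedding.subtypeVal.closure_eq_preimage_closure_image,
    image_preimage_eq_of_subset (by simpa using h)]
  exact isClosed_closure.isCompact

section DLC

variable {X : Type*} [TopologicalSpace X] {S : Set (CpI X)}

theorem exists_mem_approx_and_far_point {g : X → unitInterval}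
    (hg : g ∈ closure (Subtype.val '' S)) {p : X} {ε : ℝ}
    (hfar : ∃ᶠ y in 𝓝 p, ε ≤ dist (g y) (g p)) (P : Finset X) (F : Finset (CpI X)) {δ : ℝ}
    (hδ : 0 < δ) :
    ∃ f ∈ S, ∃ y, (∀ z ∈ P, dist (f.1 z) (g z) < δ) ∧ (∀ h ∈ F, dist (h.1 y) (h.1 p) < δ) ∧
      dist (f.1 y) (f.1 p) < δ ∧ ε ≤ dist (g y) (g p) := by
  obtain ⟨_, ⟨f, hfS, rfl⟩, hf⟩ := exists_mem_forall_dist_lt_of_mem_closure hg P hδ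
  have hnear : ∀ᶠ y in 𝓝 p, (∀ h ∈ F, dist (h.1 y) (h.1 p) < δ) ∧ dist (f.1 y) (f.1 p) < δ :=
    ((eventually_all_finset _).2 fun h _ => Metric.tendsto_nhds.1 (h.2.tendsto p) δ hδ).and
      (Metric.tendsto_nhds.1 (f.2.tendsto p) δ hδ)
  obtain ⟨y, hy_far, hF_near, hf_near⟩ := (hfar.and_eventually hnear).exists
  exact ⟨f, hfS, y, hf, hF_near, hf_near, hy_far⟩

theorem DLC.exists_subseq_tendsto (hD : DLC S) {f : ℕ → CpI X} (hf : ∀ n, f n ∈ S) {x : ℕ → X}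
    {p : X} {g : X → unitInterval}
    (h_row : ∀ n, Tendsto (fun m => (f n).1 (x m)) atTop (𝓝 ((f n).1 p)))
    (h_diag : Tendsto (fun n => (f n).1 p) atTop (𝓝 (g p)))
    (h_col : ∀ m, Tendsto (fun n => (f n).1 (x m)) atTop (𝓝 (g (x m)))) :
    ∃ φ : ℕ → ℕ, StrictMono φ ∧ Tendsto (fun m => g (x (φ m))) atTop (𝓝 (g p)) := by
  obtain ⟨L, -, φ, hφ, hL⟩ :=
    isCompact_univ.tendsto_subseq (x := fun m => g (x m)) fun _ => mem_univ _
  have hL_eq : g p = L :=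
    hD f hf (x ∘ φ) _ _ _ _ (fun n => (h_row n).comp hφ.tendsto_atTop) h_diag
      (fun m => h_col (φ m)) hL
  exact ⟨φ, hφ, hL_eq ▸ hL⟩

theorem DLC.continuous_of_mem_closure (hD : DLC S) {g : X → unitInterval}
    (hg : g ∈ closure (Subtype.val '' S)) : Continuous g := by
  classical
  refine continuous_iff_continuousAt.2 fun p => ?_
  by_contra hp
  rw [ContinuousAt, Metric.tendsto_nhds] at hp
  push Not at hp
  obtain ⟨ε, hε, hfar⟩ := hp
  -- `H` is the set of pairs `(f i, x i)` chosen before stage `n`.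
  have step (n : ℕ) (H : Finset (CpI X × X)) : ∃ q : CpI X × X, q.1 ∈ S ∧
      (∀ z ∈ insert p (H.image Prod.snd), dist (q.1.1 z) (g z) < 1 / ((n : ℝ) + 1)) ∧
      (∀ h ∈ H.image Prod.fst, dist (h.1 q.2) (h.1 p) < 1 / ((n : ℝ) + 1)) ∧
      dist (q.1.1 q.2) (q.1.1 p) < 1 / ((n : ℝ) + 1) ∧ ε ≤ dist (g q.2) (g p) := by
    obtain ⟨f, hfS, y, hq⟩ := exists_mem_approx_and_far_point hg hfar
      (insert p (H.image Prod.snd)) (H.image Prod.fst) (δ := 1 / ((n : ℝ) + 1)) (by positivity)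
    exact ⟨(f, y), hfS, hq⟩
  obtain ⟨q, hq⟩ := exists_seq_forall_of_history step
  have mem_history {m n : ℕ} (h : m < n) : q m ∈ (Finset.range n).image q :=
    Finset.mem_image_of_mem q (Finset.mem_range.2 h)
  have h_row (n : ℕ) : Tendsto (fun m => (q n).1.1 (q m).2) atTop (𝓝 ((q n).1.1 p)) := by
    refine tendsto_of_eventually_dist_lt_one_div <| (eventually_ge_atTop n).mono fun m hnm => ?_
    rcases hnm.lt_or_eq with h | rfl
    · exact (hq m).2.2.1 _ (Finset.mem_image_of_mem _ (mem_history h))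
    · exact (hq n).2.2.2.1
  have h_diag : Tendsto (fun n => (q n).1.1 p) atTop (𝓝 (g p)) :=
    tendsto_of_eventually_dist_lt_one_div <| Eventually.of_forall fun n =>
      (hq n).2.1 p (Finset.mem_insert_self _ _)
  have h_col (m : ℕ) : Tendsto (fun n => (q n).1.1 (q m).2) atTop (𝓝 (g (q m).2)) :=
    tendsto_of_eventually_dist_lt_one_div <| (eventually_gt_atTop m).mono fun n hmn =>
      (hq n).2.1 _ (Finset.mem_insert_of_mem (Finset.mem_image_of_mem _ (mem_history hmn)))
  obtain ⟨φ, -, hφ⟩ := hD.exists_subseq_tendsto (fun n => (hq n).1) h_row h_diag h_col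
  have hε_nonpos : ε ≤ 0 := by
    simpa using ge_of_tendsto' (hφ.dist tendsto_const_nhds) fun m => (hq (φ m)).2.2.2.2
  linarith

theorem DLC.isCompact_closure (hD : DLC S) : IsCompact (closure S) :=
  isCompact_closure_of_closure_image_val_subset fun _ hg => hD.continuous_of_mem_closure hg

end DLC

theorem countablyCompact_compact_iff_countablyCompactIn_iff_DLC_general
    {X : Type*} [TopologicalSpace X]
    (hX : CountablyCompactSpace' X) (S : Set (CpI X)) :
    (IsCompact (closure S) ↔ CountablyCompactIn S (Set.univ : Set (CpI X))) ∧
    (CountablyCompactIn S (Set.univ : Set (CpI X)) ↔ DLC S) :=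
  ⟨⟨countablyCompactIn_univ_of_isCompact_closure,
      fun h => (dlc_of_countablyCompactIn hX h).isCompact_closure⟩,
    ⟨dlc_of_countablyCompactIn hX,
      fun h => countablyCompactIn_univ_of_isCompact_closure h.isCompact_closure⟩⟩

/-- For countably compact `X` and `S ⊆ Cp(X,[0,1])`:
(I) `closure S` compact, (II) `S` countably compact in `Cp(X,[0,1])`, and
(III) `DLC(S,X)` are equivalent. -/
theorem countablyCompact_compact_iff_countablyCompactIn_iff_DLC
    {X : Type*} [TopologicalSpace X] [CompletelyRegularSpace X] [T2Space X]
    (hX : CountablyCompactSpace' X) (S : Set (CpI X)) :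
    (IsCompact (closure S) ↔ CountablyCompactIn S (Set.univ : Set (CpI X))) ∧
    (CountablyCompactIn S (Set.univ : Set (CpI X)) ↔ DLC S) :=
  countablyCompact_compact_iff_countablyCompactIn_iff_DLC_general hX S
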